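/- Let $K$ be a macroid with generating measure $\mu$, i.e., $\mu$ is a Borel probability measure on the space of polytopes in $\mathbb{R}^n$ with bounded support and $h_K = \int h_P\, \mu(dP)$. If $K$ is indecomposable, then $K$ is a polytope. -/

import Mathlib

open scoped Pointwise RealInnerProductSpace
open MeasureTheory

noncomputable section

/-- Support function of a convex body. -/
def sfn {n : ℕ} (K : ConvexBody (EuclideanSpace ℝ (Fin n))) (u : EuclideanSpace ℝ (Fin n)) : ℝ :=
  sSup ((fun x => ⟪x, u⟫) '' (K : Set (EuclideanSpace ℝ (Fin n))))

/-- The support of a measure on a topological space. -/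
def msupport {X : Type*} [TopologicalSpace X] [MeasurableSpace X] (μ : Measure X) : Set X :=
  {x | ∀ U : Set X, IsOpen U → x ∈ U → μ U ≠ 0}

/-- A convex body is a polytope if it is the convex hull of a finite set. -/
def IsPolytope {n : ℕ} (P : ConvexBody (EuclideanSpace ℝ (Fin n))) : Prop :=
  ∃ s : Finset (EuclideanSpace ℝ (Fin n)),
    (P : Set (EuclideanSpace ℝ (Fin n))) = convexHull ℝ ↑s

/-- The class of polytopes. -/
def Polytopes (n : ℕ) : Set (ConvexBody (EuclideanSpace ℝ (Fin n))) :=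
  {P | IsPolytope P}

/-- A convex body is indecomposable if in any Minkowski decomposition both summands
are homothets of the body. -/
def Indecomposable {n : ℕ} (K : ConvexBody (EuclideanSpace ℝ (Fin n))) : Prop :=
  ∀ A B : ConvexBody (EuclideanSpace ℝ (Fin n)), K = A + B →
    (∃ (c : ℝ) (x : EuclideanSpace ℝ (Fin n)), 0 ≤ c ∧
      (A : Set (EuclideanSpace ℝ (Fin n))) = c • (K : Set (EuclideanSpace ℝ (Fin n))) + {x}) ∧
    (∃ (c : ℝ) (x : EuclideanSpace ℝ (Fin n)), 0 ≤ c ∧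
      (B : Set (EuclideanSpace ℝ (Fin n))) = c • (K : Set (EuclideanSpace ℝ (Fin n))) + {x})

/-! If `K` is a point it is a polytope. Otherwise `K` has positive width in some direction `u₀`;
as this width is the `μ`-average of the widths of the generating bodies, some polytope `Q` in the
support of `μ` is at least as wide as `K` in direction `u₀`. For `δ > 0`, integrating the support
functions over the ball of radius `δ` around `Q` and over its complement writes `K` as a Minkowski
sum, so by indecomposability the first summand, rescaled by the mass of the ball, is a homothet of
`K` within Hausdorff distance `δ` of `Q`. Comparing widths pins the ratio of the homothety to
`width Q u₀ / width K u₀ > 0`, and letting `δ → 0` shows that `Q` is a positive homothet of `K`,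
hence `K` is a polytope. -/

open Filter Topology

section InnerProductSpace

variable {E : Type*} [NormedAddCommGroup E] [InnerProductSpace ℝ E] [FiniteDimensional ℝ E]

lemma exists_inner_eq_of_linearMap (ℓ : E →ₗ[ℝ] ℝ) : ∃ y : E, ∀ u, ⟪y, u⟫ = ℓ u :=
  ⟨(InnerProductSpace.toDual ℝ E).symm (LinearMap.toContinuousLinearMap ℓ), fun u => by
    rw [InnerProductSpace.toDual_symm_apply]; rfl⟩

lemma exists_inner_le_of_sublinear {g : E → ℝ} (hhom : ∀ c : ℝ, 0 < c → ∀ u, g (c • u) = c * g u)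
    (hadd : ∀ u v, g (u + v) ≤ g u + g v) (u : E) :
    ∃ y : E, (∀ v, ⟪y, v⟫ ≤ g v) ∧ ⟪y, u⟫ = g u := by
  have hzero : g 0 = 0 := by
    have := hhom 2 two_pos 0
    rw [smul_zero] at this
    linarith
  have hneg : -g (-u) ≤ g u := by
    have := hadd u (-u)
    rw [add_neg_cancel, hzero] at this
    linarith
  have hspan : ∀ c : ℝ, c • u = 0 → RingHom.id ℝ c • g u = 0 := fun c hc => by
    rcases smul_eq_zero.1 hc with rfl | rfl <;> simp [hzero]
  set f := LinearPMap.mkSpanSingleton' u (g u) hspan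
  have hf : ∀ x : f.domain, f x ≤ g x := by
    rintro ⟨x, hx⟩
    obtain ⟨c, rfl⟩ := Submodule.mem_span_singleton.1 hx
    rw [LinearPMap.mkSpanSingleton'_apply, RingHom.id_apply, smul_eq_mul]
    rcases lt_trichotomy c 0 with hc | rfl | hc
    · have : g (c • u) = -c * g (-u) := by
        rw [← hhom (-c) (neg_pos.2 hc), smul_neg, neg_smul, neg_neg]
      nlinarith
    · simp [hzero]
    · exact (hhom c hc u).ge
  obtain ⟨ℓ, hℓf, hℓg⟩ := exists_extension_of_le_sublinear f g hhom hadd hf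
  obtain ⟨y, hy⟩ := exists_inner_eq_of_linearMap ℓ
  refine ⟨y, fun v => (hy v).trans_le (hℓg v), ?_⟩
  rw [hy, ← LinearPMap.mkSpanSingleton'_apply_self u (g u) hspan
    (Submodule.mem_span_singleton_self u)]
  exact hℓf ⟨u, _⟩

lemma exists_inner_eq_of_forall_approx {g : E → ℝ}
    (h : ∀ ε > 0, ∃ y : E, ∀ u, |g u - ⟪y, u⟫| ≤ ε * ‖u‖) : ∃ y : E, ∀ u, g u = ⟪y, u⟫ := by
  choose y hy using fun k : ℕ => h (1 / (k + 1)) Nat.one_div_pos_of_nat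
  have hlim : Tendsto (fun k u => ⟪y k, u⟫) atTop (𝓝 g) := by
    refine tendsto_pi_nhds.2 fun u => ?_
    have hε : Tendsto (fun k : ℕ => 1 / ((k : ℝ) + 1) * ‖u‖) atTop (𝓝 0) := by
      simpa using tendsto_one_div_add_atTop_nhds_zero_nat.mul_const ‖u‖
    refine tendsto_iff_dist_tendsto_zero.2 (squeeze_zero (fun _ => dist_nonneg) (fun k => ?_) hε)
    rw [Real.dist_eq, abs_sub_comm]
    exact hy k u
  obtain ⟨z, hz⟩ :=
    exists_inner_eq_of_linearMap (linearMapOfTendsto g (fun k => innerₗ E (y k)) hlim)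
  exact ⟨z, fun u => (hz u).symm⟩

end InnerProductSpace

section MeasureSupport

lemma msupport_eq_support {X : Type*} [TopologicalSpace X] [MeasurableSpace X] (μ : Measure X) :
    msupport μ = μ.support := by
  ext x
  simp only [msupport, Measure.support_eq_forall_isOpen, Set.mem_ofPred_eq, pos_iff_ne_zero]
  exact ⟨fun h U hxU hU => h U hU hxU, fun h U hU hxU => h U hxU hU⟩

lemma inter_msupport_mem_ae {X : Type*} [TopologicalSpace X] [HereditarilyLindelofSpace X]
    [MeasurableSpace X] {μ : Measure X} {s : Set X} (hs : s ∈ ae μ) : s ∩ msupport μ ∈ ae μ :=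
  inter_mem hs (msupport_eq_support μ ▸ Measure.support_mem_ae)

instance {E : Type*} [NormedAddCommGroup E] [NormedSpace ℝ E] [SecondCountableTopology E] :
    SecondCountableTopology (ConvexBody E) :=
  have : Isometry fun K : ConvexBody E =>
      (⟨⟨K, K.isCompact⟩, K.nonempty⟩ : TopologicalSpace.NonemptyCompacts E) :=
    Isometry.of_dist_eq fun _ _ => Metric.NonemptyCompacts.dist_eq
  this.isEmbedding.secondCountableTopology

end MeasureSupport

variable {n : ℕ}

local notation "V" => EuclideanSpace ℝ (Fin n)

section SupportFunction

lemma bddAbove_image_inner (K : ConvexBody V) (u : V) :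
    BddAbove ((fun x => ⟪x, u⟫) '' (K : Set V)) :=
  (K.isCompact.image (continuous_id.inner continuous_const)).bddAbove

lemma inner_le_sfn (K : ConvexBody V) {x : V} (hx : x ∈ K) (u : V) : ⟪x, u⟫ ≤ sfn K u :=
  le_csSup (bddAbove_image_inner K u) ⟨x, hx, rfl⟩

lemma sfn_le_of_forall_inner_le (K : ConvexBody V) {u : V} {r : ℝ}
    (h : ∀ x ∈ K, ⟪x, u⟫ ≤ r) : sfn K u ≤ r :=
  csSup_le (K.nonempty.image _) (by rintro _ ⟨x, hx, rfl⟩; exact h x hx)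

lemma exists_inner_eq_sfn (K : ConvexBody V) (u : V) : ∃ x ∈ K, ⟪x, u⟫ = sfn K u := by
  obtain ⟨x, hx, hmax⟩ := K.isCompact.exists_isMaxOn K.nonempty
    (continuous_id.inner continuous_const : Continuous fun x : V => ⟪x, u⟫).continuousOn
  exact ⟨x, hx, le_antisymm (inner_le_sfn K hx u) (sfn_le_of_forall_inner_le K fun y hy => hmax hy)⟩

lemma sfn_zero_right (K : ConvexBody V) : sfn K 0 = 0 := by
  obtain ⟨x, -, hx⟩ := exists_inner_eq_sfn K 0
  rw [← hx, inner_zero_right]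

lemma sfn_zero_left (u : V) : sfn (0 : ConvexBody V) u = 0 := by
  obtain ⟨x, hx, hxu⟩ := exists_inner_eq_sfn 0 u
  rw [← SetLike.mem_coe, ConvexBody.coe_zero, Set.mem_zero] at hx
  rw [← hxu, hx, inner_zero_left]

lemma sfn_add_le (K : ConvexBody V) (u v : V) : sfn K (u + v) ≤ sfn K u + sfn K v :=
  sfn_le_of_forall_inner_le K fun x hx => by
    rw [inner_add_right]
    exact add_le_add (inner_le_sfn K hx u) (inner_le_sfn K hx v)

lemma sfn_smul_of_nonneg (K : ConvexBody V) {c : ℝ} (hc : 0 ≤ c) (u : V) :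
    sfn K (c • u) = c * sfn K u := by
  obtain ⟨x, hx, hxu⟩ := exists_inner_eq_sfn K u
  refine le_antisymm (sfn_le_of_forall_inner_le K fun y hy => ?_) ?_
  · rw [inner_smul_right]
    exact mul_le_mul_of_nonneg_left (inner_le_sfn K hy u) hc
  · rw [← hxu, ← inner_smul_right]
    exact inner_le_sfn K hx _

lemma sfn_add (A B : ConvexBody V) (u : V) : sfn (A + B) u = sfn A u + sfn B u := by
  obtain ⟨a, ha, hau⟩ := exists_inner_eq_sfn A u
  obtain ⟨b, hb, hbu⟩ := exists_inner_eq_sfn B u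
  refine le_antisymm (sfn_le_of_forall_inner_le _ fun x hx => ?_) ?_
  · obtain ⟨y, hy, z, hz, rfl⟩ := Set.mem_add.1 (by simpa [← SetLike.mem_coe] using hx)
    rw [inner_add_left]
    exact add_le_add (inner_le_sfn A hy u) (inner_le_sfn B hz u)
  · have hab : a + b ∈ A + B := by
      rw [← SetLike.mem_coe, ConvexBody.coe_add]
      exact Set.add_mem_add ha hb
    rw [← hau, ← hbu, ← inner_add_left]
    exact inner_le_sfn _ hab u

lemma sfn_of_coe_eq_homothet {A K : ConvexBody V} {c : ℝ} {x : V} (hc : 0 ≤ c)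
    (h : (A : Set V) = c • (K : Set V) + {x}) (u : V) :
    sfn A u = c * sfn K u + ⟪x, u⟫ := by
  obtain ⟨k, hk, hku⟩ := exists_inner_eq_sfn K u
  refine le_antisymm (sfn_le_of_forall_inner_le A fun y hy => ?_) ?_
  · rw [← SetLike.mem_coe, h, Set.add_singleton] at hy
    obtain ⟨_, ⟨k', hk', rfl⟩, rfl⟩ := hy
    rw [inner_add_left, real_inner_smul_left]
    gcongr
    exact inner_le_sfn K hk' u
  · have hmem : c • k + x ∈ A := by
      rw [← SetLike.mem_coe, h]
      exact Set.add_mem_add (Set.smul_mem_smul_set hk) rfl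
    rw [← hku, ← real_inner_smul_left, ← inner_add_left]
    exact inner_le_sfn A hmem u

lemma mem_of_forall_inner_le_sfn (K : ConvexBody V) {x : V} (h : ∀ u, ⟪x, u⟫ ≤ sfn K u) :
    x ∈ K := by
  by_contra hx
  obtain ⟨f, r, hf, hr⟩ := geometric_hahn_banach_closed_point K.convex K.isClosed hx
  set v : V := (InnerProductSpace.toDual ℝ V).symm f
  have hfv : ∀ z : V, f z = ⟪z, v⟫ := fun z => by
    rw [real_inner_comm, InnerProductSpace.toDual_symm_apply]
  have hv : sfn K v ≤ r := sfn_le_of_forall_inner_le K fun y hy => (hfv y ▸ hf y hy).le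
  linarith [h v, hfv x]

lemma eq_of_forall_sfn_eq {K L : ConvexBody V} (h : ∀ u, sfn K u = sfn L u) : K = L := by
  ext x
  exact ⟨fun hx => mem_of_forall_inner_le_sfn L fun u => h u ▸ inner_le_sfn K hx u,
    fun hx => mem_of_forall_inner_le_sfn K fun u => (h u).symm ▸ inner_le_sfn L hx u⟩

lemma sfn_sub_le_dist_mul_norm (P Q : ConvexBody V) (u : V) :
    sfn P u - sfn Q u ≤ dist P Q * ‖u‖ := by
  obtain ⟨p, hp, hpu⟩ := exists_inner_eq_sfn P u
  obtain ⟨q, hq, hpq⟩ := Q.isCompact.exists_infDist_eq_dist Q.nonempty p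
  have hdist : ‖p - q‖ ≤ dist P Q := by
    rw [← dist_eq_norm, ← hpq, ← ConvexBody.hausdorffDist_coe]
    exact Metric.infDist_le_hausdorffDist_of_mem hp ConvexBody.hausdorffEDist_ne_top
  calc sfn P u - sfn Q u ≤ ⟪p, u⟫ - ⟪q, u⟫ := by linarith [inner_le_sfn Q hq u]
    _ = ⟪p - q, u⟫ := (inner_sub_left p q u).symm
    _ ≤ ‖p - q‖ * ‖u‖ := real_inner_le_norm _ _
    _ ≤ dist P Q * ‖u‖ := by gcongr

lemma abs_sfn_sub_le_dist_mul_norm (P Q : ConvexBody V) (u : V) :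
    |sfn P u - sfn Q u| ≤ dist P Q * ‖u‖ :=
  abs_sub_le_iff.2 ⟨sfn_sub_le_dist_mul_norm P Q u, dist_comm P Q ▸ sfn_sub_le_dist_mul_norm Q P u⟩

lemma abs_sfn_le_dist_zero_mul_norm (P : ConvexBody V) (u : V) : |sfn P u| ≤ dist P 0 * ‖u‖ := by
  simpa [sfn_zero_left] using abs_sfn_sub_le_dist_mul_norm P 0 u

lemma continuous_sfn (u : V) : Continuous fun P : ConvexBody V => sfn P u :=
  LipschitzWith.continuous (K := ‖u‖₊) <| LipschitzWith.of_dist_le_mul fun P Q => by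
    rw [Real.dist_eq, mul_comm]
    exact abs_sfn_sub_le_dist_mul_norm P Q u

lemma exists_sfn_eq_of_sublinear {g : V → ℝ} (hhom : ∀ c : ℝ, 0 < c → ∀ u, g (c • u) = c * g u)
    (hadd : ∀ u v, g (u + v) ≤ g u + g v) {C : ℝ} (hbd : ∀ u, g u ≤ C * ‖u‖) :
    ∃ A : ConvexBody V, ∀ u, sfn A u = g u := by
  set s : Set V := {x | ∀ u, ⟪x, u⟫ ≤ g u}
  have hclosed : IsClosed s := by
    simp only [s, Set.ofPred_forall]
    exact isClosed_iInter fun u => isClosed_le (continuous_id.inner continuous_const)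
      continuous_const
  have hconv : Convex ℝ s := by
    simp only [s, Set.ofPred_forall]
    exact convex_iInter fun u => convex_halfSpace_le ((innerₗ V).flip u).isLinear _
  have hbdd : Bornology.IsBounded s := by
    refine (Metric.isBounded_iff_subset_closedBall 0).2 ⟨max C 0, fun x hx => ?_⟩
    have := (hx x).trans (hbd x)
    rw [real_inner_self_eq_norm_mul_norm] at this
    rw [mem_closedBall_zero_iff]
    nlinarith [le_max_left C 0, le_max_right C 0, norm_nonneg x]
  obtain ⟨x₀, hx₀, -⟩ := exists_inner_le_of_sublinear hhom hadd 0
  refine ⟨⟨s, hconv, Metric.isCompact_of_isClosed_isBounded hclosed hbdd, ⟨x₀, hx₀⟩⟩, fun u => ?_⟩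
  obtain ⟨y, hy, hyu⟩ := exists_inner_le_of_sublinear hhom hadd u
  exact le_antisymm (sfn_le_of_forall_inner_le _ fun x hx => hx u)
    (hyu ▸ inner_le_sfn _ (show y ∈ s from hy) u)

end SupportFunction

section Homothets

def width (K : ConvexBody V) (u : V) : ℝ := sfn K u + sfn K (-u)

lemma IsPolytope.of_forall_width_nonpos {K : ConvexBody V} (h : ∀ u, width K u ≤ 0) :
    IsPolytope K := by
  obtain ⟨x₀, hx₀⟩ := K.nonempty
  have hK : (K : Set V) = {x₀} := by
    refine Set.eq_singleton_iff_unique_mem.2 ⟨hx₀, fun x hx => ?_⟩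
    have hle : ⟪x - x₀, x - x₀⟫ ≤ 0 := by
      have h₁ := inner_le_sfn K hx (x - x₀)
      have h₂ := inner_le_sfn K hx₀ (-(x - x₀))
      have h₃ := h (x - x₀)
      rw [inner_neg_right] at h₂
      rw [width] at h₃
      rw [inner_sub_left]
      linarith
    exact sub_eq_zero.1 (real_inner_self_nonpos.1 hle)
  exact ⟨{x₀}, by rw [hK, Finset.coe_singleton, convexHull_singleton]⟩

lemma coe_eq_image_of_sfn_eq_homothet {K Q : ConvexBody V} {c : ℝ} {y : V} (hc : 0 < c)
    (h : ∀ u, sfn Q u = c * sfn K u + ⟪y, u⟫) :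
    (K : Set V) = (fun z => c⁻¹ • (z - y)) '' Q := by
  ext x
  constructor
  · intro hx
    refine ⟨c • x + y, mem_of_forall_inner_le_sfn Q fun u => ?_, by simp [hc.ne']⟩
    rw [h, inner_add_left, real_inner_smul_left]
    gcongr
    exact inner_le_sfn K hx u
  · rintro ⟨z, hz, rfl⟩
    refine mem_of_forall_inner_le_sfn K fun u => ?_
    rw [real_inner_smul_left, inner_sub_left, inv_mul_le_iff₀ hc]
    linarith [inner_le_sfn Q hz u, h u]

lemma IsPolytope.of_sfn_eq_homothet {K Q : ConvexBody V} {c : ℝ} {y : V} (hQ : IsPolytope Q)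
    (hc : 0 < c) (h : ∀ u, sfn Q u = c * sfn K u + ⟪y, u⟫) : IsPolytope K := by
  obtain ⟨s, hs⟩ := hQ
  refine ⟨s.image fun z => c⁻¹ • (z - y), ?_⟩
  rw [coe_eq_image_of_sfn_eq_homothet hc h, hs, Finset.coe_image]
  exact (c⁻¹ • (AffineMap.id ℝ V - AffineMap.const ℝ V y)).image_convexHull _

lemma exists_sfn_eq_homothet_of_approx {K Q : ConvexBody V} {u₀ : V} (hK : 0 < width K u₀)
    (h : ∀ δ > 0, ∃ (c : ℝ) (y : V), ∀ u, |c * sfn K u + ⟪y, u⟫ - sfn Q u| ≤ δ * ‖u‖) :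
    ∃ y : V, ∀ u, sfn Q u = width Q u₀ / width K u₀ * sfn K u + ⟪y, u⟫ := by
  set t := width Q u₀ / width K u₀
  set M := 1 + 2 * ‖u₀‖ * dist K 0 / width K u₀
  suffices ∀ ε > 0, ∃ y : V, ∀ u, |sfn Q u - t * sfn K u - ⟪y, u⟫| ≤ ε * ‖u‖ by
    obtain ⟨y, hy⟩ := exists_inner_eq_of_forall_approx this
    exact ⟨y, fun u => by linarith [hy u]⟩
  intro ε hε
  obtain ⟨c, y, hcy⟩ := h (ε / M) (by positivity)
  have hct : |c - t| ≤ 2 * (ε / M) * ‖u₀‖ / width K u₀ := by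
    have hsplit : (c - t) * width K u₀ = (c * sfn K u₀ + ⟪y, u₀⟫ - sfn Q u₀)
        + (c * sfn K (-u₀) + ⟪y, -u₀⟫ - sfn Q (-u₀)) := by
      rw [sub_mul, div_mul_cancel₀ _ hK.ne']
      simp only [width, inner_neg_right]
      ring
    have h₁ := hcy u₀
    have h₂ := hcy (-u₀)
    rw [norm_neg] at h₂
    rw [le_div_iff₀ hK, ← abs_of_pos hK, ← abs_mul, hsplit]
    linarith [abs_add_le (c * sfn K u₀ + ⟪y, u₀⟫ - sfn Q u₀)
      (c * sfn K (-u₀) + ⟪y, -u₀⟫ - sfn Q (-u₀))]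
  refine ⟨y, fun u => ?_⟩
  calc |sfn Q u - t * sfn K u - ⟪y, u⟫|
      = |(c - t) * sfn K u - (c * sfn K u + ⟪y, u⟫ - sfn Q u)| := by ring_nf
    _ ≤ |c - t| * |sfn K u| + ε / M * ‖u‖ := by
      rw [← abs_mul]
      exact (abs_sub _ _).trans (add_le_add le_rfl (hcy u))
    _ ≤ 2 * (ε / M) * ‖u₀‖ / width K u₀ * (dist K 0 * ‖u‖) + ε / M * ‖u‖ := by
      gcongr
      exact abs_sfn_le_dist_zero_mul_norm K u
    _ = ε * ‖u‖ := by
      simp only [M]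
      field_simp
      ring

end Homothets

section Macroid

variable [MeasurableSpace (ConvexBody (EuclideanSpace ℝ (Fin n)))]
  {μ : Measure (ConvexBody (EuclideanSpace ℝ (Fin n)))}

lemma exists_ae_abs_sfn_le {s : Set (ConvexBody V)} (hs : s ∈ ae μ)
    (hbd : Bornology.IsBounded s) : ∃ r, ∀ᵐ P ∂μ, ∀ u, |sfn P u| ≤ r * ‖u‖ := by
  obtain ⟨r, hr⟩ := hbd.subset_closedBall 0
  refine ⟨r, ?_⟩
  filter_upwards [hs] with P hP u
  exact (abs_sfn_le_dist_zero_mul_norm P u).trans (by gcongr; exact hr hP)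

variable [OpensMeasurableSpace (ConvexBody (EuclideanSpace ℝ (Fin n)))] [IsFiniteMeasure μ] {r : ℝ}

lemma integrable_sfn (hr : ∀ᵐ P ∂μ, ∀ u, |sfn P u| ≤ r * ‖u‖) (u : V) :
    Integrable (fun P => sfn P u) μ :=
  (integrable_const (r * ‖u‖)).mono' (continuous_sfn u).aestronglyMeasurable
    (hr.mono fun _ hP => hP u)

lemma exists_sfn_eq_setIntegral (hr : ∀ᵐ P ∂μ, ∀ u, |sfn P u| ≤ r * ‖u‖) (T : Set (ConvexBody V)) :
    ∃ A : ConvexBody V, ∀ u, sfn A u = ∫ P in T, sfn P u ∂μ := by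
  refine exists_sfn_eq_of_sublinear (C := r * μ.real T) (fun c hc u => ?_) (fun u v => ?_)
    fun u => ?_
  · rw [← integral_const_mul]
    exact integral_congr_ae (.of_forall fun P => sfn_smul_of_nonneg P hc.le u)
  · rw [← integral_add (integrable_sfn hr u).restrict (integrable_sfn hr v).restrict]
    exact integral_mono (integrable_sfn hr _).restrict
      ((integrable_sfn hr u).add (integrable_sfn hr v)).restrict fun P => sfn_add_le P u v
  · calc ∫ P in T, sfn P u ∂μ ≤ ‖∫ P in T, sfn P u ∂μ‖ := le_abs_self _
      _ ≤ r * ‖u‖ * μ.real T :=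
        norm_setIntegral_le_of_norm_le_const_ae' (measure_lt_top μ T) (hr.mono fun _ hP _ => hP u)
      _ = r * μ.real T * ‖u‖ := by ring

lemma width_eq_integral {K : ConvexBody V} (hK : ∀ u, sfn K u = ∫ P, sfn P u ∂μ)
    (hr : ∀ᵐ P ∂μ, ∀ u, |sfn P u| ≤ r * ‖u‖) (u : V) : width K u = ∫ P, width P u ∂μ := by
  rw [width, hK, hK, ← integral_add (integrable_sfn hr u) (integrable_sfn hr (-u))]
  rfl

lemma Indecomposable.exists_setIntegral_sfn_eq {K : ConvexBody V} (hInd : Indecomposable K)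
    (hK : ∀ u, sfn K u = ∫ P, sfn P u ∂μ) (hr : ∀ᵐ P ∂μ, ∀ u, |sfn P u| ≤ r * ‖u‖)
    {T : Set (ConvexBody V)} (hT : MeasurableSet T) :
    ∃ (c : ℝ) (x : V), ∀ u, ∫ P in T, sfn P u ∂μ = c * sfn K u + ⟪x, u⟫ := by
  obtain ⟨A, hA⟩ := exists_sfn_eq_setIntegral hr T
  obtain ⟨B, hB⟩ := exists_sfn_eq_setIntegral hr Tᶜ
  have hKAB : K = A + B := eq_of_forall_sfn_eq fun u => by
    rw [sfn_add, hA, hB, hK, integral_add_compl hT (integrable_sfn hr u)]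
  obtain ⟨⟨c, x, hc, hAK⟩, -⟩ := hInd A B hKAB
  exact ⟨c, x, fun u => (hA u).symm.trans (sfn_of_coe_eq_homothet hc hAK u)⟩

lemma Indecomposable.exists_homothet_near_of_mem_msupport {K Q : ConvexBody V}
    (hInd : Indecomposable K) (hK : ∀ u, sfn K u = ∫ P, sfn P u ∂μ)
    (hr : ∀ᵐ P ∂μ, ∀ u, |sfn P u| ≤ r * ‖u‖) (hQ : Q ∈ msupport μ) {δ : ℝ} (hδ : 0 < δ) :
    ∃ (c : ℝ) (y : V), ∀ u, |c * sfn K u + ⟪y, u⟫ - sfn Q u| ≤ δ * ‖u‖ := by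
  set S := Metric.ball Q δ
  have hm : 0 < μ.real S :=
    ENNReal.toReal_pos (hQ S Metric.isOpen_ball (Metric.mem_ball_self hδ)) (measure_ne_top μ S)
  obtain ⟨c, x, hcx⟩ := hInd.exists_setIntegral_sfn_eq hK hr (T := S) measurableSet_ball
  refine ⟨c / μ.real S, (μ.real S)⁻¹ • x, fun u => ?_⟩
  have hnear : |∫ P in S, sfn P u ∂μ - μ.real S * sfn Q u| ≤ δ * ‖u‖ * μ.real S := by
    rw [← smul_eq_mul, ← setIntegral_const,
      ← integral_sub (integrable_sfn hr u).restrict (integrable_const _), ← Real.norm_eq_abs]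
    refine norm_setIntegral_le_of_norm_le_const (measure_lt_top μ S) fun P hP => ?_
    rw [Real.norm_eq_abs]
    exact (abs_sfn_sub_le_dist_mul_norm P Q u).trans (by gcongr; exact (Metric.mem_ball.1 hP).le)
  have hsplit : c / μ.real S * sfn K u + ⟪(μ.real S)⁻¹ • x, u⟫ - sfn Q u
      = (∫ P in S, sfn P u ∂μ - μ.real S * sfn Q u) / μ.real S := by
    rw [hcx, real_inner_smul_left]
    field_simp
  rw [hsplit, abs_div, abs_of_pos hm, div_le_iff₀ hm]
  exact hnear

end Macroid

theorem indecomposable_macroid_is_polytope {n : ℕ}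
    [MeasurableSpace (ConvexBody (EuclideanSpace ℝ (Fin n)))]
    [BorelSpace (ConvexBody (EuclideanSpace ℝ (Fin n)))]
    (μ : Measure (ConvexBody (EuclideanSpace ℝ (Fin n)))) [IsProbabilityMeasure μ]
    (hconc : μ (Polytopes n)ᶜ = 0)
    (hbd : Bornology.IsBounded (Polytopes n ∩ msupport μ))
    (K : ConvexBody (EuclideanSpace ℝ (Fin n)))
    (hK : ∀ u, sfn K u = ∫ P, sfn P u ∂μ)
    (hInd : Indecomposable K) :
    IsPolytope K := by
  by_cases hpoint : ∀ u, width K u ≤ 0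
  · exact .of_forall_width_nonpos hpoint
  obtain ⟨u₀, hu₀⟩ := not_forall.1 hpoint
  rw [not_le] at hu₀
  have hS := inter_msupport_mem_ae (mem_ae_iff.2 hconc)
  obtain ⟨r, hr⟩ := exists_ae_abs_sfn_le hS hbd
  obtain ⟨Q, hQS, hKQ⟩ := exists_notMem_null_integral_le (f := fun P => width P u₀)
    ((integrable_sfn hr u₀).add (integrable_sfn hr (-u₀))) (mem_ae_iff.1 hS)
  rw [← width_eq_integral hK hr] at hKQ
  obtain ⟨hQ, hQμ⟩ : Q ∈ Polytopes n ∩ msupport μ := not_not.1 hQS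
  obtain ⟨y, hy⟩ := exists_sfn_eq_homothet_of_approx hu₀ fun δ hδ =>
    hInd.exists_homothet_near_of_mem_msupport hK hr hQμ hδ
  exact hQ.of_sfn_eq_homothet (div_pos (hu₀.trans_le hKQ) hu₀) hy
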